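/- For the one-dimensional Chebyshev case, the pushforward under (x,y) = (cos θ, cos η) of the measure (x−y)² K_N(x,y)² μ_eq(dx)μ_eq(dy) converges weakly, as N → ∞, to (2π²)^{-1}(1 − cos θ cos η) dθ dη on [0,π]²; equivalently, (x−y)² K_N(x,y)² μ_eq(dx)μ_eq(dy) converges weakly to (1/2)(1 − xy) μ_eq(dx)μ_eq(dy). -/

import Mathlib

open MeasureTheory Filter

/-- The normalized Chebyshev polynomials of the first kind on `[-1,1]`. -/
noncomputable def nT (k : ℕ) (x : ℝ) : ℝ :=
  if k = 0 then 1 else Real.sqrt 2 * Real.cos (k * Real.arccos x)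

/-- Density of the arcsine (equilibrium) measure `μ_eq` on `[-1,1]`. -/
noncomputable def weq (x : ℝ) : ℝ := 1 / (Real.pi * Real.sqrt (1 - x ^ 2))

/-- Christoffel–Darboux kernel of the arcsine measure. -/
noncomputable def KCheb (N : ℕ) (x y : ℝ) : ℝ :=
  ∑ k ∈ Finset.range N, nT k x * nT k y

/-!
By Christoffel–Darboux, with Mathlib's unnormalized Chebyshev polynomials `T`,
`(x - y) K_{n+1}(x, y) = T_{n+1}(x) T_n(y) - T_n(x) T_{n+1}(y)` on
`[-1, 1]²`, so the density `(x - y)² K_{n+1}²` is bounded by `4` there and splits into three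
products of one-variable functions. Since `2 T_a T_b = T_{a+b} + T_{a-b}` and `T_m` is orthogonal
to all polynomials of degree `< m`, the moments `∫ x^i T_{n+1}²`, `∫ x^i T_n²`, `∫ x^i T_{n+1} T_n`
equal those of `1/2`, `1/2`, `x/2` once `i < 2n`. Hence every mixed moment `∫ x^i y^j` of the
density agrees with that of `(1 - x y) / 2` for large `n`, and Stone–Weierstrass on the square,
with the uniform bound, passes from polynomial test functions to continuous ones.
Mathlib's `measureT` is `π μ_eq`.
-/

open Real Set Topology Polynomial Polynomial.Chebyshev

theorem tendsto_of_forall_approx {ι α : Type*} [PseudoMetricSpace α] {l : Filter ι}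
    {u : ι → α} {a : α}
    (h : ∀ ε > 0, ∃ v : ι → α, ∃ b, Tendsto v l (𝓝 b) ∧ (∀ i, dist (u i) (v i) ≤ ε) ∧
      dist b a ≤ ε) :
    Tendsto u l (𝓝 a) := by
  refine Metric.tendsto_nhds.2 fun ε hε => ?_
  obtain ⟨v, b, hv, huv, hba⟩ := h (ε / 3) (by positivity)
  filter_upwards [Metric.tendsto_nhds.1 hv (ε / 3) (by positivity)] with i hi
  calc dist (u i) a ≤ dist (u i) (v i) + dist (v i) b + dist b a := dist_triangle4 _ _ _ _
    _ < ε := by linarith [huv i]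

section MomentMethod

variable {X : Type*} [MeasurableSpace X] {μ : Measure X} [IsFiniteMeasure μ] {K : Set X}

theorem norm_integral_mul_le_of_forall_mem {f ρ : X → ℝ} {δ C : ℝ} (hμK : ∀ᵐ x ∂μ, x ∈ K)
    (hf : ∀ x ∈ K, ‖f x‖ ≤ δ) (hρ : ∀ᵐ x ∂μ, ‖ρ x‖ ≤ C) :
    ‖∫ x, f x * ρ x ∂μ‖ ≤ C * μ.real univ * δ := by
  have hbound : ∀ᵐ x ∂μ, ‖f x * ρ x‖ ≤ δ * C := by
    filter_upwards [hμK, hρ] with x hx hρx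
    rw [norm_mul]
    exact mul_le_mul (hf x hx) hρx (norm_nonneg _) ((norm_nonneg _).trans (hf x hx))
  calc ‖∫ x, f x * ρ x ∂μ‖ ≤ δ * C * μ.real univ := norm_integral_le_of_norm_le_const hbound
    _ = C * μ.real univ * δ := by ring

variable [TopologicalSpace X] [OpensMeasurableSpace X]

theorem Continuous.integrable_of_ae_mem_isCompact {f : X → ℝ} (hf : Continuous f)
    (hK : IsCompact K) (hμK : ∀ᵐ x ∂μ, x ∈ K) : Integrable f μ := by
  obtain ⟨C, hC⟩ := hK.exists_bound_of_continuousOn hf.continuousOn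
  exact .of_bound hf.aestronglyMeasurable C (hμK.mono hC)

theorem Continuous.integrable_mul_of_ae_norm_le {f σ : X → ℝ} {C : ℝ} (hf : Continuous f)
    (hK : IsCompact K) (hμK : ∀ᵐ x ∂μ, x ∈ K) (hσ : AEStronglyMeasurable σ μ)
    (hσC : ∀ᵐ x ∂μ, ‖σ x‖ ≤ C) : Integrable (fun x => f x * σ x) μ :=
  (hf.integrable_of_ae_mem_isCompact hK hμK).mul_bdd hσ hσC

variable {ι : Type*} {l : Filter ι} {ρ : ι → X → ℝ} {ρ' : X → ℝ} {C : ℝ}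

theorem tendsto_integral_mul_of_mem_adjoin (hK : IsCompact K) (hμK : ∀ᵐ x ∂μ, x ∈ K)
    (hρ : ∀ i, AEStronglyMeasurable (ρ i) μ) (hρ' : AEStronglyMeasurable ρ' μ)
    (hρC : ∀ i, ∀ᵐ x ∂μ, ‖ρ i x‖ ≤ C) (hρ'C : ∀ᵐ x ∂μ, ‖ρ' x‖ ≤ C) {s : Set C(X, ℝ)}
    (hmom : ∀ q ∈ Submonoid.closure s,
      Tendsto (fun i => ∫ x, q x * ρ i x ∂μ) l (𝓝 (∫ x, q x * ρ' x ∂μ)))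
    {q : C(X, ℝ)} (hq : q ∈ Algebra.adjoin ℝ s) :
    Tendsto (fun i => ∫ x, q x * ρ i x ∂μ) l (𝓝 (∫ x, q x * ρ' x ∂μ)) := by
  rw [← Subalgebra.mem_toSubmodule, Algebra.adjoin_eq_span] at hq
  induction hq using Submodule.span_induction with
  | mem q hq => exact hmom q hq
  | zero => simpa using tendsto_const_nhds
  | add q r _ _ hq hr =>
    have hadd : ∀ σ : X → ℝ, AEStronglyMeasurable σ μ → (∀ᵐ x ∂μ, ‖σ x‖ ≤ C) →
        ∫ x, (q + r) x * σ x ∂μ = ∫ x, q x * σ x ∂μ + ∫ x, r x * σ x ∂μ := fun σ hσ hσC => by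
      simp only [ContinuousMap.add_apply, add_mul]
      exact integral_add (q.continuous.integrable_mul_of_ae_norm_le hK hμK hσ hσC)
        (r.continuous.integrable_mul_of_ae_norm_le hK hμK hσ hσC)
    simpa only [hadd _ (hρ _) (hρC _), hadd _ hρ' hρ'C] using hq.add hr
  | smul c q _ hq =>
    simpa only [ContinuousMap.smul_apply, smul_eq_mul, mul_assoc, integral_const_mul]
      using hq.const_mul c

theorem tendsto_integral_mul_of_tendsto_moments (hK : IsCompact K) (hμK : ∀ᵐ x ∂μ, x ∈ K)
    (hρ : ∀ i, AEStronglyMeasurable (ρ i) μ) (hρ' : AEStronglyMeasurable ρ' μ)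
    (hρC : ∀ i, ∀ᵐ x ∂μ, ‖ρ i x‖ ≤ C) (hρ'C : ∀ᵐ x ∂μ, ‖ρ' x‖ ≤ C) {s : Set C(X, ℝ)}
    (hs : (Algebra.adjoin ℝ s).SeparatesPoints)
    (hmom : ∀ q ∈ Submonoid.closure s,
      Tendsto (fun i => ∫ x, q x * ρ i x ∂μ) l (𝓝 (∫ x, q x * ρ' x ∂μ)))
    {g : X → ℝ} (hg : Continuous g) :
    Tendsto (fun i => ∫ x, g x * ρ i x ∂μ) l (𝓝 (∫ x, g x * ρ' x ∂μ)) := by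
  refine tendsto_of_forall_approx fun ε hε => ?_
  obtain ⟨δ, hδ, hδε⟩ := exists_pos_mul_lt hε (C * μ.real univ)
  obtain ⟨q, hqA, hq⟩ :=
    ContinuousMap.exists_mem_subalgebra_near_continuous_of_isCompact_of_separatesPoints
      hs ⟨g, hg⟩ hK hδ
  have hgq : ∀ σ : X → ℝ, AEStronglyMeasurable σ μ → (∀ᵐ x ∂μ, ‖σ x‖ ≤ C) →
      dist (∫ x, g x * σ x ∂μ) (∫ x, q x * σ x ∂μ) ≤ ε := fun σ hσ hσC => by
    calc dist (∫ x, g x * σ x ∂μ) (∫ x, q x * σ x ∂μ)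
        = ‖∫ x, (g x - q x) * σ x ∂μ‖ := by
          simp_rw [dist_eq_norm, sub_mul]
          rw [integral_sub (hg.integrable_mul_of_ae_norm_le hK hμK hσ hσC)
            (q.continuous.integrable_mul_of_ae_norm_le hK hμK hσ hσC)]
      _ ≤ C * μ.real univ * δ := norm_integral_mul_le_of_forall_mem hμK
          (fun x hx => by rw [norm_sub_rev]; exact (hq x hx).le) hσC
      _ ≤ ε := hδε.le
  exact ⟨_, _, tendsto_integral_mul_of_mem_adjoin hK hμK hρ hρ' hρC hρ'C hmom hqA,
    fun i => hgq _ (hρ i) (hρC i), dist_comm (α := ℝ) _ _ ▸ hgq _ hρ' hρ'C⟩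

end MomentMethod

instance isFiniteMeasure_measureT : IsFiniteMeasure measureT :=
  (integrable_const_iff_isFiniteMeasure one_ne_zero).1 (integrable_measureT continuousOn_const)

theorem ae_measureT_mem_Icc : ∀ᵐ x ∂measureT, x ∈ Icc (-1 : ℝ) 1 := by
  rw [measureT]
  exact (ae_restrict_mem measurableSet_Ioc).mono fun _ hx => Ioc_subset_Icc_self hx

theorem ae_prod_measureT_mem_Icc :
    ∀ᵐ p ∂measureT.prod measureT, p ∈ Icc (-1 : ℝ) 1 ×ˢ Icc (-1 : ℝ) 1 :=
  (Measure.ae_prod_mem_iff_ae_ae_mem (measurableSet_Icc.prod measurableSet_Icc)).2 <|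
    ae_measureT_mem_Icc.mono fun _ hx => ae_measureT_mem_Icc.mono fun _ hy => ⟨hx, hy⟩

theorem Continuous.integrable_prod_measureT {f : ℝ × ℝ → ℝ} (hf : Continuous f) :
    Integrable f (measureT.prod measureT) :=
  hf.integrable_of_ae_mem_isCompact (isCompact_Icc.prod isCompact_Icc) ae_prod_measureT_mem_Icc

theorem setIntegral_Icc_mul_weq (f : ℝ → ℝ) :
    ∫ x in Icc (-1 : ℝ) 1, f x * weq x = π⁻¹ * ∫ x, f x ∂measureT := by
  rw [integral_measureT, intervalIntegral.integral_of_le (by norm_num),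
    ← integral_Icc_eq_integral_Ioc, ← integral_const_mul]
  congr 1 with x
  rw [weq, one_div, mul_inv, Real.sqrt_inv]
  ring

theorem setIntegral_Icc_setIntegral_Icc_mul_weq {F : ℝ × ℝ → ℝ} (hF : Continuous F) :
    ∫ x in Icc (-1 : ℝ) 1, ∫ y in Icc (-1 : ℝ) 1, F (x, y) * weq x * weq y =
      π⁻¹ ^ 2 * ∫ p, F p ∂measureT.prod measureT := by
  have inner : ∀ x, ∫ y in Icc (-1 : ℝ) 1, F (x, y) * weq x * weq y =
      π⁻¹ * (∫ y, F (x, y) ∂measureT) * weq x := fun x => by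
    simp_rw [mul_right_comm _ (weq x)]
    rw [integral_mul_const, setIntegral_Icc_mul_weq]
  simp_rw [inner, setIntegral_Icc_mul_weq, integral_const_mul]
  rw [integral_prod F hF.integrable_prod_measureT]
  ring

theorem integral_pow_mul_eval_T_eq_zero (i : ℕ) {k : ℤ} (hk : (i : ℤ) < k) :
    ∫ x, x ^ i * (T ℝ k).eval x ∂measureT = 0 := by
  induction i generalizing k with
  | zero => simpa using integral_eval_T_real_measureT_of_ne_zero (by omega : k ≠ 0)
  | succ i ih =>
    have hrec : ∀ x : ℝ, x ^ (i + 1) * (T ℝ k).eval x =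
        x ^ i * (T ℝ (k + 1)).eval x / 2 + x ^ i * (T ℝ (k - 1)).eval x / 2 := fun x => by
      rw [T_add_one]
      simp only [eval_sub, eval_mul, eval_X, eval_ofNat]
      ring
    simp_rw [hrec]
    rw [integral_add (integrable_measureT (by fun_prop)) (integrable_measureT (by fun_prop)),
      integral_div, integral_div, ih (by omega), ih (by omega)]
    simp

theorem integral_pow_mul_eval_T_mul_eval_T {i : ℕ} {a b : ℤ} (h : (i : ℤ) < a + b) :
    ∫ x, x ^ i * ((T ℝ a).eval x * (T ℝ b).eval x) ∂measureT =
      (∫ x, x ^ i * (T ℝ (a - b)).eval x ∂measureT) / 2 := by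
  have hprod : ∀ x : ℝ, x ^ i * ((T ℝ a).eval x * (T ℝ b).eval x) =
      x ^ i * (T ℝ (a + b)).eval x / 2 + x ^ i * (T ℝ (a - b)).eval x / 2 := fun x => by
    have := congrArg (eval x) (T_mul_T ℝ a b)
    simp only [eval_add, eval_mul, eval_ofNat] at this
    linear_combination x ^ i / 2 * this
  simp_rw [hprod]
  rw [integral_add (integrable_measureT (by fun_prop)) (integrable_measureT (by fun_prop)),
    integral_div, integral_div, integral_pow_mul_eval_T_eq_zero i h]
  ring

theorem continuous_nT (k : ℕ) : Continuous (nT k) := by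
  unfold nT
  split_ifs <;> fun_prop

theorem nT_eq_of_mem {k : ℕ} (hk : k ≠ 0) {x : ℝ} (hx : x ∈ Icc (-1 : ℝ) 1) :
    nT k x = √2 * (T ℝ k).eval x := by
  conv_rhs => rw [← cos_arccos hx.1 hx.2, T_real_cos]
  simp [nT, hk]

theorem sub_mul_KCheb_succ {x y : ℝ} (hx : x ∈ Icc (-1 : ℝ) 1) (hy : y ∈ Icc (-1 : ℝ) 1)
    (n : ℕ) : (x - y) * KCheb (n + 1) x y =
      (T ℝ (n + 1)).eval x * (T ℝ n).eval y - (T ℝ n).eval x * (T ℝ (n + 1)).eval y := by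
  induction n with
  | zero => simp [KCheb, nT]
  | succ n ih =>
    have hrec : ∀ z : ℝ,
        (T ℝ (n + 1 + 1)).eval z = 2 * z * (T ℝ (n + 1)).eval z - (T ℝ n).eval z := fun z => by
      rw [add_assoc, one_add_one_eq_two, T_add_two]
      simp
    rw [KCheb, Finset.sum_range_succ, ← KCheb, mul_add, ih, nT_eq_of_mem n.succ_ne_zero hx,
      nT_eq_of_mem n.succ_ne_zero hy]
    push_cast
    rw [hrec, hrec]
    linear_combination (x - y) * (T ℝ (n + 1)).eval x * (T ℝ (n + 1)).eval y *
      Real.sq_sqrt (zero_le_two (α := ℝ))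

theorem sq_sub_mul_KCheb_succ_le {x y : ℝ} (hx : x ∈ Icc (-1 : ℝ) 1)
    (hy : y ∈ Icc (-1 : ℝ) 1) (n : ℕ) : (x - y) ^ 2 * KCheb (n + 1) x y ^ 2 ≤ 4 := by
  have hT : ∀ (k : ℤ) {z : ℝ}, z ∈ Icc (-1 : ℝ) 1 → |(T ℝ k).eval z| ≤ 1 := fun k z hz =>
    abs_eval_T_real_le_one k (abs_le.2 hz)
  set a := (T ℝ (n + 1)).eval x
  set b := (T ℝ n).eval x
  set c := (T ℝ (n + 1)).eval y
  set d := (T ℝ n).eval y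
  have hdet : |a * d - b * c| ≤ 2 := calc
    |a * d - b * c| ≤ |a| * |d| + |b| * |c| := by rw [← abs_mul, ← abs_mul]; exact abs_sub _ _
    _ ≤ 1 * 1 + 1 * 1 := by gcongr <;> exact hT _ ‹_›
    _ = 2 := by norm_num
  rw [← mul_pow, sub_mul_KCheb_succ hx hy, ← sq_abs]
  nlinarith [abs_nonneg (a * d - b * c)]

noncomputable def offDiagonalDensity (N : ℕ) (p : ℝ × ℝ) : ℝ :=
  (p.1 - p.2) ^ 2 * KCheb N p.1 p.2 ^ 2

noncomputable def limitDensity (p : ℝ × ℝ) : ℝ := 1 / 2 * (1 - p.1 * p.2)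

theorem continuous_offDiagonalDensity (N : ℕ) : Continuous (offDiagonalDensity N) := by
  unfold offDiagonalDensity KCheb
  have := continuous_nT
  fun_prop

theorem continuous_limitDensity : Continuous limitDensity := by
  unfold limitDensity
  fun_prop

theorem norm_offDiagonalDensity_succ_le {p : ℝ × ℝ}
    (hp : p ∈ Icc (-1 : ℝ) 1 ×ˢ Icc (-1 : ℝ) 1) (n : ℕ) : ‖offDiagonalDensity (n + 1) p‖ ≤ 4 := by
  rw [offDiagonalDensity, Real.norm_of_nonneg (by positivity)]
  exact sq_sub_mul_KCheb_succ_le hp.1 hp.2 n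

theorem norm_limitDensity_le {p : ℝ × ℝ} (hp : p ∈ Icc (-1 : ℝ) 1 ×ˢ Icc (-1 : ℝ) 1) :
    ‖limitDensity p‖ ≤ 1 := by
  obtain ⟨⟨hx₁, hx₂⟩, hy₁, hy₂⟩ := hp
  rw [limitDensity, Real.norm_eq_abs, abs_le]
  constructor <;> nlinarith [mul_nonneg (sub_nonneg.2 hx₂) (sub_nonneg.2 hy₂),
    mul_nonneg (neg_le_iff_add_nonneg.1 hx₁) (neg_le_iff_add_nonneg.1 hy₁),
    mul_nonneg (sub_nonneg.2 hx₂) (neg_le_iff_add_nonneg.1 hy₁),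
    mul_nonneg (neg_le_iff_add_nonneg.1 hx₁) (sub_nonneg.2 hy₂)]

theorem integral_monomial_mul_symmetrized {a b c : ℝ → ℝ} (ha : Continuous a)
    (hb : Continuous b) (hc : Continuous c) (i j : ℕ) :
    ∫ p, p.1 ^ i * p.2 ^ j * (a p.1 * b p.2 + b p.1 * a p.2 - 2 * (c p.1 * c p.2))
        ∂measureT.prod measureT =
      (∫ x, x ^ i * a x ∂measureT) * (∫ y, y ^ j * b y ∂measureT) +
        (∫ x, x ^ i * b x ∂measureT) * (∫ y, y ^ j * a y ∂measureT) -
        2 * ((∫ x, x ^ i * c x ∂measureT) * (∫ y, y ^ j * c y ∂measureT)) := by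
  have hsep : ∀ u v : ℝ → ℝ, ∫ p, p.1 ^ i * p.2 ^ j * (u p.1 * v p.2) ∂measureT.prod measureT =
      (∫ x, x ^ i * u x ∂measureT) * (∫ y, y ^ j * v y ∂measureT) := fun u v => by
    rw [← integral_prod_mul]
    congr 1 with p
    ring
  simp_rw [mul_sub, mul_add, mul_left_comm _ (2 : ℝ)]
  rw [integral_sub (Continuous.integrable_prod_measureT (by fun_prop))
      (Continuous.integrable_prod_measureT (by fun_prop)),
    integral_add (Continuous.integrable_prod_measureT (by fun_prop))
      (Continuous.integrable_prod_measureT (by fun_prop)), integral_const_mul, hsep, hsep, hsep]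

theorem integral_monomial_mul_offDiagonalDensity {i j n : ℕ} (hi : i < 2 * n) (hj : j < 2 * n) :
    ∫ p, p.1 ^ i * p.2 ^ j * offDiagonalDensity (n + 1) p ∂measureT.prod measureT =
      ∫ p, p.1 ^ i * p.2 ^ j * limitDensity p ∂measureT.prod measureT := by
  set t : ℝ → ℝ := fun x => (T ℝ (n + 1)).eval x
  set s : ℝ → ℝ := fun x => (T ℝ n).eval x
  have hsq : ∀ (m : ℤ) (k : ℕ), (k : ℤ) < m + m →
      ∫ x, x ^ k * ((T ℝ m).eval x * (T ℝ m).eval x) ∂measureT =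
        ∫ x, x ^ k * (1 / 2) ∂measureT := fun m k hk => by
    rw [integral_pow_mul_eval_T_mul_eval_T hk, sub_self, integral_mul_const]
    simp [div_eq_mul_inv]
  have htt : ∀ k < 2 * n, ∫ x, x ^ k * (t x * t x) ∂measureT = ∫ x, x ^ k * (1 / 2) ∂measureT :=
    fun k hk => hsq _ k (by omega)
  have hss : ∀ k < 2 * n, ∫ x, x ^ k * (s x * s x) ∂measureT = ∫ x, x ^ k * (1 / 2) ∂measureT :=
    fun k hk => hsq _ k (by omega)
  have hts : ∀ k < 2 * n, ∫ x, x ^ k * (t x * s x) ∂measureT = ∫ x, x ^ k * (x / 2) ∂measureT :=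
    fun k hk => by
      rw [integral_pow_mul_eval_T_mul_eval_T (by omega), add_sub_cancel_left, T_one]
      simp [mul_div_assoc', integral_div]
  have hρ : ∀ᵐ p ∂measureT.prod measureT, offDiagonalDensity (n + 1) p =
      t p.1 * t p.1 * (s p.2 * s p.2) + s p.1 * s p.1 * (t p.2 * t p.2) -
        2 * (t p.1 * s p.1 * (t p.2 * s p.2)) :=
    ae_prod_measureT_mem_Icc.mono fun p hp => by
      rw [offDiagonalDensity, ← mul_pow, sub_mul_KCheb_succ hp.1 hp.2]
      ring
  have hlim : ∀ p : ℝ × ℝ,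
      limitDensity p = 1 / 2 * (1 / 2) + 1 / 2 * (1 / 2) - 2 * (p.1 / 2 * (p.2 / 2)) :=
    fun p => by rw [limitDensity]; ring
  rw [integral_congr_ae (hρ.mono fun p hp => by rw [hp]), funext hlim]
  rw [integral_monomial_mul_symmetrized (a := fun x => t x * t x) (b := fun x => s x * s x)
    (c := fun x => t x * s x) (by fun_prop) (by fun_prop) (by fun_prop),
    integral_monomial_mul_symmetrized (a := fun _ => 1 / 2) (b := fun _ => 1 / 2)
    (c := fun x => x / 2) (by fun_prop) (by fun_prop) (by fun_prop)]
  simp only [htt i hi, htt j hj, hss i hi, hss j hj, hts i hi, hts j hj]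

theorem separatesPoints_adjoin_fst_snd :
    (Algebra.adjoin ℝ {ContinuousMap.fst, ContinuousMap.snd} :
      Subalgebra ℝ C(ℝ × ℝ, ℝ)).SeparatesPoints := by
  intro p q hpq
  by_cases h : p.1 = q.1
  · exact ⟨_, ⟨ContinuousMap.snd, Algebra.subset_adjoin (by simp), rfl⟩,
      fun h' => hpq (Prod.ext h h')⟩
  · exact ⟨_, ⟨ContinuousMap.fst, Algebra.subset_adjoin (by simp), rfl⟩, h⟩

theorem tendsto_integral_mul_offDiagonalDensity_of_mem_closure {q : C(ℝ × ℝ, ℝ)}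
    (hq : q ∈ Submonoid.closure {ContinuousMap.fst, ContinuousMap.snd}) :
    Tendsto (fun n => ∫ p, q p * offDiagonalDensity (n + 1) p ∂measureT.prod measureT) atTop
      (𝓝 (∫ p, q p * limitDensity p ∂measureT.prod measureT)) := by
  obtain ⟨i, j, rfl⟩ := (Submonoid.mem_closure_pair _ _ _).1 hq
  refine tendsto_const_nhds.congr' ?_
  filter_upwards [eventually_gt_atTop (i + j)] with n hn
  simpa using (integral_monomial_mul_offDiagonalDensity (by omega) (by omega)).symm

theorem chebyshev_offdiagonal_weak_convergence_general
    (g : ℝ × ℝ → ℝ) (hg : Continuous g) :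
    Tendsto (fun N : ℕ =>
        ∫ x in Set.Icc (-1 : ℝ) 1, ∫ y in Set.Icc (-1 : ℝ) 1,
          g (x, y) * ((x - y) ^ 2 * (KCheb N x y) ^ 2) * weq x * weq y)
      atTop
      (nhds (∫ x in Set.Icc (-1 : ℝ) 1, ∫ y in Set.Icc (-1 : ℝ) 1,
        g (x, y) * ((1 / 2) * (1 - x * y)) * weq x * weq y)) := by
  have hmain := tendsto_integral_mul_of_tendsto_moments (isCompact_Icc.prod isCompact_Icc)
    ae_prod_measureT_mem_Icc
    (fun n => (continuous_offDiagonalDensity (n + 1)).aestronglyMeasurable)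
    continuous_limitDensity.aestronglyMeasurable
    (fun n => ae_prod_measureT_mem_Icc.mono fun p hp => norm_offDiagonalDensity_succ_le hp n)
    (ae_prod_measureT_mem_Icc.mono fun p hp => (norm_limitDensity_le hp).trans (by norm_num))
    separatesPoints_adjoin_fst_snd
    (fun q hq => tendsto_integral_mul_offDiagonalDensity_of_mem_closure hq) hg
  rw [← tendsto_add_atTop_iff_nat 1]
  convert hmain.const_mul (π⁻¹ ^ 2) using 2 with n
  · exact setIntegral_Icc_setIntegral_Icc_mul_weq
      (F := fun p => g p * offDiagonalDensity (n + 1) p) (hg.mul (continuous_offDiagonalDensity _))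
  · exact setIntegral_Icc_setIntegral_Icc_mul_weq (F := fun p => g p * limitDensity p)
      (hg.mul continuous_limitDensity)

/-- Weak convergence of the off-diagonal measures in the Chebyshev case: as `N → ∞`, the
measure `(x−y)² K_N(x,y)² μ_eq(dx) μ_eq(dy)` converges weakly to
`(1/2)(1 − xy) μ_eq(dx) μ_eq(dy)`, i.e. the integrals of every bounded continuous test
function converge. -/
theorem chebyshev_offdiagonal_weak_convergence
    (g : ℝ × ℝ → ℝ) (hg : Continuous g) (hbdd : ∃ C, ∀ p, |g p| ≤ C) :
    Tendsto (fun N : ℕ =>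
        ∫ x in Set.Icc (-1 : ℝ) 1, ∫ y in Set.Icc (-1 : ℝ) 1,
          g (x, y) * ((x - y) ^ 2 * (KCheb N x y) ^ 2) * weq x * weq y)
      atTop
      (nhds (∫ x in Set.Icc (-1 : ℝ) 1, ∫ y in Set.Icc (-1 : ℝ) 1,
        g (x, y) * ((1 / 2) * (1 - x * y)) * weq x * weq y)) :=
  chebyshev_offdiagonal_weak_convergence_general g hg
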